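/- arXiv:0805.0106 — 4 statements merged into one kernel-verified Lean document; each statement's English description precedes it below -/
import Mathlib

section
/- Fix β₀ ∈ (0, π/12], R₀ ≥ 1, γ > 0 and constants 0 < c_V ≤ C_V. Let 𝒮 = {z ∈ ℂ : |z| ≥ R₀, Re z > 0, |arg z| ≤ 3β₀}, and let g be holomorphic on an open set containing 𝒮 with |g(z)| ≤ C_V |z|^{−γ} for all z ∈ 𝒮; assume moreover that g is real-valued on [R₀, ∞) with g(r) ≥ c_V r^{−γ} for all real r ≥ R₀. Then there exist β₁ ∈ (0, β₀] and a constant C, both depending only on β₀, γ, c_V, C_V, such that for all r₀ ≥ 2R₀, all r ≥ r₀ and all β ∈ [0, β₁], writing r_β = r₀ + (r − r₀)e^{iβ}: |g(r_β) − g(r)| ≤ C β g(r). -/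
open Real Set

/-- The sector `{z ∈ ℂ : |z| ≥ R₀, Re z > 0, |arg z| ≤ 3β₀}`. -/
def sector (R₀ β₀ : ℝ) : Set ℂ :=
  {z : ℂ | R₀ ≤ ‖z‖ ∧ 0 < z.re ∧ |Complex.arg z| ≤ 3 * β₀}

/-!
Every point `z` of the arc `θ ↦ r₀ + (r - r₀) e^{iθ}`, `0 ≤ θ ≤ β₀`, sees the whole disc of
radius `(sin β₀ / 3) |z|` inside the sector, and `r / 2 ≤ |z|`, `r - r₀ ≤ |z|`. Cauchy's estimate
on that disc gives `|g'(z)| ≲ |z|^{-γ} / |z|`, so the arc's speed `r - r₀` times `|g'(z)|` is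
`O(r^{-γ})`. The mean value inequality along the arc then yields
`|g(r_β) - g(r)| = O(β r^{-γ}) = O(β g(r))`.
-/

open Complex Metric

theorem Complex.abs_arg_le_of_abs_im_le {w : ℂ} {α : ℝ} (hre : 0 ≤ w.re) (hα : α ∈ Ico 0 (π / 2))
    (him : |w.im| ≤ Real.sin α * ‖w‖) : |arg w| ≤ α := by
  have hsin : |w.im / ‖w‖| ≤ Real.sin α := by
    rw [abs_div, abs_norm]
    exact div_le_of_le_mul₀ (norm_nonneg w)
      (sin_nonneg_of_nonneg_of_le_pi hα.1 (by linarith [hα.2, pi_pos])) him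
  rw [arg_of_re_nonneg hre, abs_le,
    le_arcsin_iff_sin_le' ⟨by linarith [hα.2], by linarith [hα.1, pi_pos]⟩,
    arcsin_le_iff_le_sin' ⟨by linarith [hα.1, pi_pos], hα.2⟩, Real.sin_neg]
  exact abs_le.mp hsin

theorem Real.one_half_le_cos {θ : ℝ} (h0 : 0 ≤ θ) (h : θ ≤ π / 3) : 1 / 2 ≤ Real.cos θ := by
  rw [← cos_pi_div_three]
  exact cos_le_cos_of_nonneg_of_le_pi h0 (by linarith [pi_pos]) h

theorem Complex.norm_deriv_le_of_norm_le_rpow {g : ℂ → ℂ} {z : ℂ} {δ ρ C γ : ℝ}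
    (hδ : δ ∈ Ioo 0 1) (hρ : 0 < ρ) (hρz : ρ ≤ ‖z‖) (hγ : 0 ≤ γ)
    (hg : DifferentiableOn ℂ g (closedBall z (δ * ‖z‖)))
    (hbound : ∀ w ∈ closedBall z (δ * ‖z‖), ‖g w‖ ≤ C * ‖w‖ ^ (-γ)) :
    ‖deriv g z‖ ≤ C * ((1 - δ) * ρ) ^ (-γ) / (δ * ‖z‖) := by
  have hradius : 0 < δ * ‖z‖ := mul_pos hδ.1 (hρ.trans_le hρz)
  have hC : 0 ≤ C := nonneg_of_mul_nonneg_left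
    ((norm_nonneg _).trans (hbound z (mem_closedBall_self hradius.le)))
    (rpow_pos_of_pos (hρ.trans_le hρz) _)
  rw [← closure_ball z hradius.ne'] at hg
  refine norm_deriv_le_of_forall_mem_sphere_norm_le hradius hg.diffContOnCl fun w hw ↦ ?_
  have hw_norm : (1 - δ) * ρ ≤ ‖w‖ := by
    rw [mem_sphere, dist_eq_norm] at hw
    nlinarith [norm_sub_norm_le z w, norm_sub_rev z w, hδ.2]
  calc ‖g w‖ ≤ C * ‖w‖ ^ (-γ) := hbound w (sphere_subset_closedBall hw)
    _ ≤ C * ((1 - δ) * ρ) ^ (-γ) := mul_le_mul_of_nonneg_left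
      (rpow_le_rpow_of_nonpos (mul_pos (sub_pos.2 hδ.2) hρ) hw_norm (neg_nonpos.2 hγ)) hC

theorem closedBall_subset_sector {R₀ β₀ : ℝ} (hβ₀ : β₀ ∈ Ioc 0 (π / 12)) {z : ℂ}
    (hR₀ : 2 * R₀ ≤ ‖z‖) (hre : ‖z‖ < 2 * z.re) (him : |z.im| ≤ Real.sin β₀ * ‖z‖) :
    closedBall z (Real.sin β₀ / 3 * ‖z‖) ⊆ sector R₀ β₀ := by
  intro w hw
  rw [mem_closedBall, dist_eq_norm] at hw
  have hs : Real.sin β₀ ≤ 1 / 2 := (Real.sin_le hβ₀.1.le).trans (by linarith [hβ₀.2, pi_lt_four])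
  have hs0 : 0 ≤ Real.sin β₀ := sin_nonneg_of_nonneg_of_le_pi hβ₀.1.le (by linarith [hβ₀.2, pi_pos])
  have hsin3 : 2 * Real.sin β₀ ≤ Real.sin (3 * β₀) := by
    rw [Real.sin_three_mul]
    have h : 0 ≤ 1 / 2 + Real.sin β₀ := by linarith
    nlinarith [mul_nonneg hs0 (mul_nonneg (sub_nonneg.2 hs) h)]
  set s := Real.sin β₀
  have hz0 : 0 ≤ ‖z‖ := norm_nonneg z
  have hwz : ‖w - z‖ ≤ ‖z‖ / 6 := by nlinarith
  have hnorm : ‖z‖ - ‖w - z‖ ≤ ‖w‖ := by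
    linarith [norm_sub_norm_le z w, norm_sub_rev z w]
  have hre_w : z.re - ‖w - z‖ ≤ w.re := by
    linarith [sub_re w z, neg_abs_le (w - z).re, abs_re_le_norm (w - z)]
  have him_w : |w.im| ≤ |z.im| + ‖w - z‖ := by
    calc |w.im| = |z.im + (w - z).im| := by rw [sub_im, add_sub_cancel]
      _ ≤ |z.im| + |(w - z).im| := abs_add_le _ _
      _ ≤ |z.im| + ‖w - z‖ := by gcongr; exact abs_im_le_norm _
  refine ⟨by linarith, by linarith, abs_arg_le_of_abs_im_le (by linarith)
    ⟨by linarith [hβ₀.1], by linarith [hβ₀.2, pi_pos]⟩ ?_⟩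
  calc |w.im| ≤ 2 * s * (‖z‖ - s / 3 * ‖z‖) := by
        nlinarith [mul_nonneg (mul_nonneg hs0 (by linarith : 0 ≤ 1 - s)) hz0]
    _ ≤ 2 * s * ‖w‖ := by gcongr; linarith
    _ ≤ Real.sin (3 * β₀) * ‖w‖ := by gcongr

noncomputable def extDilation (r₀ r θ : ℝ) : ℂ :=
  (r₀ : ℂ) + ((r : ℂ) - (r₀ : ℂ)) * Complex.exp (Complex.I * (θ : ℂ))

section extDilation

variable {r₀ r θ : ℝ}

@[simp]
theorem extDilation_zero : extDilation r₀ r 0 = r := by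
  simp [extDilation]

@[simp]
theorem extDilation_re : (extDilation r₀ r θ).re = r₀ + (r - r₀) * Real.cos θ := by
  simp [extDilation, mul_comm I, exp_mul_I, ← ofReal_cos, ← ofReal_sin]

@[simp]
theorem extDilation_im : (extDilation r₀ r θ).im = (r - r₀) * Real.sin θ := by
  simp [extDilation, mul_comm I, exp_mul_I, ← ofReal_cos, ← ofReal_sin]

theorem hasDerivAt_extDilation :
    HasDerivAt (extDilation r₀ r) (((r : ℂ) - r₀) * (Complex.exp (I * θ) * I)) θ := by
  have hexp : HasDerivAt (fun t : ℂ => Complex.exp (I * t)) (Complex.exp (I * θ) * I) θ := by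
    simpa using ((hasDerivAt_id (θ : ℂ)).const_mul I).cexp
  exact (hexp.comp_ofReal.const_mul _).const_add _

theorem norm_deriv_extDilation :
    ‖((r : ℂ) - r₀) * (Complex.exp (I * θ) * I)‖ = |r - r₀| := by
  simp [norm_exp, ← ofReal_sub]

theorem norm_extDilation_le (hr₀ : 0 ≤ r₀) (hr : r₀ ≤ r) : ‖extDilation r₀ r θ‖ ≤ r := by
  calc ‖extDilation r₀ r θ‖ ≤ ‖(r₀ : ℂ)‖ + ‖((r : ℂ) - r₀) * Complex.exp (I * θ)‖ := norm_add_le _ _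
    _ = r := by
      rw [norm_mul, norm_exp, ← ofReal_sub, norm_real, norm_real, Real.norm_of_nonneg hr₀,
        Real.norm_of_nonneg (sub_nonneg.2 hr)]
      simp

theorem sub_le_norm_extDilation (hr₀ : 0 ≤ r₀) (hr : r₀ ≤ r) (hcos : 0 ≤ Real.cos θ) :
    r - r₀ ≤ ‖extDilation r₀ r θ‖ := by
  refine abs_le_of_sq_le_sq' ?_ (norm_nonneg _) |>.2
  rw [Complex.sq_norm, normSq_apply, extDilation_re, extDilation_im]
  nlinarith [Real.sin_sq_add_cos_sq θ, mul_nonneg (mul_nonneg hr₀ (sub_nonneg.2 hr)) hcos]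

theorem add_div_two_le_re_extDilation (hr : r₀ ≤ r) (hcos : 1 / 2 ≤ Real.cos θ) :
    (r + r₀) / 2 ≤ (extDilation r₀ r θ).re := by
  rw [extDilation_re]
  nlinarith

theorem norm_sub_le_of_norm_deriv_extDilation_le {g : ℂ → ℂ} {β M : ℝ} (hβ : 0 ≤ β)
    (hg : ∀ θ ∈ Icc 0 β, DifferentiableAt ℂ g (extDilation r₀ r θ))
    (hM : ∀ θ ∈ Icc 0 β, |r - r₀| * ‖deriv g (extDilation r₀ r θ)‖ ≤ M) :
    ‖g (extDilation r₀ r β) - g r‖ ≤ M * β := by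
  have hderiv : ∀ θ ∈ Icc 0 β, HasDerivWithinAt (g ∘ extDilation r₀ r)
      ((((r : ℂ) - r₀) * (Complex.exp (I * θ) * I)) • deriv g (extDilation r₀ r θ)) (Icc 0 β) θ :=
    fun θ hθ ↦ ((hg θ hθ).hasDerivAt.scomp θ hasDerivAt_extDilation).hasDerivWithinAt
  have h := (convex_Icc 0 β).norm_image_sub_le_of_norm_hasDerivWithin_le hderiv
    (fun θ hθ ↦ by rw [norm_smul, norm_deriv_extDilation]; exact hM θ hθ)
    (left_mem_Icc.2 hβ) (right_mem_Icc.2 hβ)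
  simpa [abs_of_nonneg hβ] using h

theorem closedBall_extDilation_subset_sector {R₀ β₀ : ℝ} (hβ₀ : β₀ ∈ Ioc 0 (π / 12))
    (hR₀ : 2 * R₀ ≤ r₀) (hr₀ : 0 < r₀) (hr : r₀ ≤ r) (hθ : θ ∈ Icc 0 β₀) :
    closedBall (extDilation r₀ r θ) (Real.sin β₀ / 3 * ‖extDilation r₀ r θ‖) ⊆ sector R₀ β₀ := by
  have hcos : 1 / 2 ≤ Real.cos θ := one_half_le_cos hθ.1 (by linarith [hθ.2, hβ₀.2, pi_pos])
  have hsin : 0 ≤ Real.sin θ :=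
    sin_nonneg_of_nonneg_of_le_pi hθ.1 (by linarith [hθ.2, hβ₀.2, pi_pos])
  have hsin_le : Real.sin θ ≤ Real.sin β₀ :=
    sin_le_sin_of_le_of_le_pi_div_two (by linarith [hθ.1, pi_pos]) (by linarith [hβ₀.2, pi_pos])
      hθ.2
  have hsub := sub_le_norm_extDilation hr₀.le hr (by linarith : 0 ≤ Real.cos θ)
  have hre := add_div_two_le_re_extDilation hr hcos
  have hnorm := norm_extDilation_le (θ := θ) hr₀.le hr
  refine closedBall_subset_sector hβ₀ ?_ ?_ ?_
  · linarith [re_le_norm (extDilation r₀ r θ)]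
  · linarith
  · rw [extDilation_im, abs_of_nonneg (mul_nonneg (sub_nonneg.2 hr) hsin), mul_comm (Real.sin β₀)]
    exact mul_le_mul hsub hsin_le hsin (norm_nonneg _)

theorem abs_sub_mul_norm_deriv_extDilation_le {g : ℂ → ℂ} {δ C γ : ℝ} (hr₀ : 0 < r₀)
    (hr : r₀ ≤ r) (hcos : 1 / 2 ≤ Real.cos θ) (hδ : δ ∈ Ioo 0 1) (hγ : 0 ≤ γ) (hC : 0 ≤ C)
    (hg : DifferentiableOn ℂ g (closedBall (extDilation r₀ r θ) (δ * ‖extDilation r₀ r θ‖)))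
    (hbound : ∀ w ∈ closedBall (extDilation r₀ r θ) (δ * ‖extDilation r₀ r θ‖),
      ‖g w‖ ≤ C * ‖w‖ ^ (-γ)) :
    |r - r₀| * ‖deriv g (extDilation r₀ r θ)‖ ≤ C / δ * ((1 - δ) / 2) ^ (-γ) * r ^ (-γ) := by
  set z := extDilation r₀ r θ
  have hhalf : r / 2 ≤ ‖z‖ := by
    linarith [add_div_two_le_re_extDilation hr hcos, re_le_norm z]
  have hsub : r - r₀ ≤ ‖z‖ := sub_le_norm_extDilation hr₀.le hr (by linarith)
  have hcauchy := norm_deriv_le_of_norm_le_rpow hδ (by linarith) hhalf hγ hg hbound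
  have hK : 0 ≤ ((1 - δ) * (r / 2)) ^ (-γ) := rpow_nonneg (by nlinarith [hδ.2]) _
  calc |r - r₀| * ‖deriv g z‖
      ≤ (r - r₀) * (C * ((1 - δ) * (r / 2)) ^ (-γ) / (δ * ‖z‖)) := by
        rw [abs_of_nonneg (sub_nonneg.2 hr)]; gcongr
    _ = C * ((1 - δ) * (r / 2)) ^ (-γ) / δ * ((r - r₀) / ‖z‖) := by ring
    _ ≤ C * ((1 - δ) * (r / 2)) ^ (-γ) / δ :=
        mul_le_of_le_one_right (div_nonneg (mul_nonneg hC hK) hδ.1.le)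
          (div_le_one_of_le₀ hsub (norm_nonneg _))
    _ = C / δ * ((1 - δ) / 2) ^ (-γ) * r ^ (-γ) := by
        rw [show (1 - δ) * (r / 2) = (1 - δ) / 2 * r by ring,
          mul_rpow (by linarith [hδ.2]) (by linarith)]
        ring

end extDilation

/-- Uniform first-order expansion of the exterior-scaled potential: if `g` is holomorphic
on an open set containing the sector `sector R₀ β₀`, bounded by `C_V |z|^{-γ}` there,
real-valued on `[R₀, ∞)` with `g(r) ≥ c_V r^{-γ}`, then there are `β₁ ∈ (0, β₀]` and `C`
depending only on `β₀, γ, c_V, C_V` such that for `r₀ ≥ 2R₀`, `r ≥ r₀`, `β ∈ [0, β₁]`,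
writing `r_β = r₀ + (r - r₀)e^{iβ}`: `|g(r_β) - g(r)| ≤ C β g(r)`. -/
theorem first_order_expansion_exterior_scaling (β₀ γ c_V C_V : ℝ)
    (hβ : β₀ ∈ Set.Ioc 0 (π / 12)) (hγ : 0 < γ) (hc : 0 < c_V) (hcC : c_V ≤ C_V) :
    ∃ β₁ : ℝ, β₁ ∈ Set.Ioc 0 β₀ ∧ ∃ C : ℝ, 0 < C ∧ ∀ R₀ : ℝ, 1 ≤ R₀ →
      ∀ (g : ℂ → ℂ) (U : Set ℂ), IsOpen U → sector R₀ β₀ ⊆ U → DifferentiableOn ℂ g U →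
      (∀ z ∈ sector R₀ β₀, ‖g z‖ ≤ C_V * ‖z‖ ^ (-γ)) →
      (∀ r : ℝ, R₀ ≤ r → (g (r : ℂ)).im = 0 ∧ c_V * r ^ (-γ) ≤ (g (r : ℂ)).re) →
      ∀ r₀ : ℝ, 2 * R₀ ≤ r₀ → ∀ r : ℝ, r₀ ≤ r → ∀ β : ℝ, β ∈ Set.Icc 0 β₁ →
        ‖g ((r₀ : ℂ) + ((r : ℂ) - (r₀ : ℂ)) * Complex.exp (Complex.I * (β : ℂ)))
            - g (r : ℂ)‖
          ≤ C * β * (g (r : ℂ)).re := by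
  have hsin : 0 < Real.sin β₀ := sin_pos_of_pos_of_lt_pi hβ.1 (by linarith [hβ.2, pi_pos])
  obtain ⟨δ, hδ_def, hδ⟩ : ∃ δ, δ = Real.sin β₀ / 3 ∧ δ ∈ Ioo 0 1 :=
    ⟨_, rfl, by positivity, by linarith [Real.sin_le_one β₀]⟩
  have hC_V : 0 < C_V := hc.trans_le hcC
  obtain ⟨C, hC_def, hC⟩ : ∃ C, C = C_V / δ * ((1 - δ) / 2) ^ (-γ) / c_V ∧ 0 < C :=
    ⟨_, rfl, div_pos (mul_pos (div_pos hC_V hδ.1) (rpow_pos_of_pos (by linarith [hδ.2]) _)) hc⟩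
  refine ⟨β₀, ⟨hβ.1, le_rfl⟩, C, hC, ?_⟩
  intro R₀ hR₀ g U hU hSU hg hbound hreal r₀ hr₀ r hr β hβ'
  have hr₀_pos : 0 < r₀ := by linarith
  have hball : ∀ θ ∈ Icc 0 β,
      closedBall (extDilation r₀ r θ) (δ * ‖extDilation r₀ r θ‖) ⊆ sector R₀ β₀ :=
    fun θ hθ ↦ hδ_def ▸
      closedBall_extDilation_subset_sector hβ hr₀ hr₀_pos hr ⟨hθ.1, hθ.2.trans hβ'.2⟩
  calc ‖g (extDilation r₀ r β) - g r‖ ≤ C_V / δ * ((1 - δ) / 2) ^ (-γ) * r ^ (-γ) * β := by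
        refine norm_sub_le_of_norm_deriv_extDilation_le hβ'.1 (fun θ hθ ↦ ?_) (fun θ hθ ↦ ?_)
        · exact hg.differentiableAt <| hU.mem_nhds <| hSU <|
            hball θ hθ (mem_closedBall_self (mul_nonneg hδ.1.le (norm_nonneg _)))
        · exact abs_sub_mul_norm_deriv_extDilation_le hr₀_pos hr
            (one_half_le_cos hθ.1 (by linarith [hθ.2, hβ'.2, hβ.2, pi_pos])) hδ hγ.le hC_V.le
            (hg.mono ((hball θ hθ).trans hSU)) (fun w hw ↦ hbound w (hball θ hθ hw))
    _ = C * β * (c_V * r ^ (-γ)) := by rw [hC_def]; field_simp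
    _ ≤ C * β * (g r).re :=
        mul_le_mul_of_nonneg_left (hreal r (by linarith)).2 (mul_nonneg hC.le hβ'.1)
end

section
/- Let 0 < c_V ≤ C_V and set c_S = c_V / (12 C_V). Let λ > 0, r > 0 and r₀ ∈ [0, r/2], and assume r ≥ 1/C_V. Let v, v′ be real numbers with v > 0, v′ ≤ 0, |v′| ≥ c_V v, and v ≤ (1 + c_S) λ. Then |(r − r₀) v′ + 2(v − λ)| ≥ c_S λ. -/
/-- The non-trapping inequality: with `c_S = c_V / (12 C_V)`, if `λ > 0`, `0 < r`,
`r₀ ∈ [0, r/2]`, `r ≥ 1/C_V`, and `v, v'` satisfy `v > 0`, `v' ≤ 0`, `|v'| ≥ c_V v`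
and `v ≤ (1 + c_S) λ`, then `|(r - r₀) v' + 2 (v - λ)| ≥ c_S λ`. -/
theorem nontrapping_inequality (c_V C_V : ℝ) (hc : 0 < c_V) (hcC : c_V ≤ C_V)
    (lam r r₀ v v' : ℝ) (hlam : 0 < lam) (hr : 0 < r)
    (hr₀ : r₀ ∈ Set.Icc 0 (r / 2)) (hrC : 1 / C_V ≤ r)
    (hv : 0 < v) (hv' : v' ≤ 0) (hvv' : c_V * v ≤ |v'|)
    (hvlam : v ≤ (1 + c_V / (12 * C_V)) * lam) :
    c_V / (12 * C_V) * lam ≤ |(r - r₀) * v' + 2 * (v - lam)| := by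
  set s := c_V / (12 * C_V) with hs
  have hC : 0 < C_V := lt_of_lt_of_le hc hcC
  have hspos : 0 < s := by positivity
  have hs12 : s ≤ 1 / 12 := by
    rw [hs, div_le_div_iff₀ (by positivity) (by norm_num)]
    nlinarith
  have habs : |v'| = -v' := abs_of_nonpos hv'
  have hv'le : v' ≤ -(c_V * v) := by rw [habs] at hvv'; linarith
  have hrr : 1 / (2 * C_V) ≤ r - r₀ := by
    have h2 : 1 / (2 * C_V) = (1 / C_V) / 2 := by ring
    have := hr₀.2
    linarith
  have hrrpos : 0 < 1 / (2 * C_V) := by positivity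
  have h1 : (r - r₀) * v' ≤ (1 / (2 * C_V)) * v' :=
    mul_le_mul_of_nonpos_right hrr hv'
  have h2 : (1 / (2 * C_V)) * v' ≤ (1 / (2 * C_V)) * (-(c_V * v)) :=
    mul_le_mul_of_nonneg_left hv'le (le_of_lt hrrpos)
  have h3 : (1 / (2 * C_V)) * (-(c_V * v)) = -(6 * s * v) := by
    rw [hs]; field_simp; ring
  have hkey : (r - r₀) * v' + 2 * (v - lam) ≤ -(s * lam) := by
    rcases le_or_gt v ((1 - s / 2) * lam) with hcase | hcase
    · have hnn : (r - r₀) * v' ≤ 0 := by nlinarith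
      nlinarith
    · have hE : (r - r₀) * v' + 2 * (v - lam) ≤ -(6 * s * v) + 2 * (v - lam) := by
        linarith [h1.trans (h2.trans_eq h3)]
      nlinarith [mul_pos hspos hlam, mul_pos hspos hv, sq_nonneg s,
        mul_pos (mul_pos hspos hspos) hlam]
  have : s * lam ≤ -((r - r₀) * v' + 2 * (v - lam)) := by linarith
  calc s * lam ≤ -((r - r₀) * v' + 2 * (v - lam)) := this
    _ ≤ |(r - r₀) * v' + 2 * (v - lam)| := neg_le_abs _
end

section
/- There is a universal constant C > 0 such that for all real r > 0, r₀ ∈ [0, r] and β with |β| ≤ π/3, writing r_β = r₀ + (r − r₀)e^{iβ} (which is nonzero since Re(r_β) ≥ r cos β > 0): | r² e^{2iβ} / r_β² − 1 − 2iβ (r₀/r) | ≤ C (r₀/r) β². -/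
/-!
With `ρ = r₀ / r` and `u = ρ (e^{-iβ} - 1)` one has `r_β = r e^{iβ} (1 + u)`, so the quantity is
`(1 + u)⁻² - 1 - 2iβρ = [(1 + u)⁻² - 1 + 2u] - 2ρ (e^{-iβ} - 1 + iβ)`.
The bracket equals `u² (3 + 2u) / (1 + u)²` with `|u| ≤ ρ|β|`, and `Re (1 + u) ≥ cos β ≥ 1/2` keeps
the denominator away from zero; the last term is a second-order Taylor remainder of `e^{-iβ}`.
Both are `O(ρ β²)` since `ρ ≤ 1`.
-/

open Real

lemma Complex.norm_exp_I_mul_ofReal_sub_one_sub_le (t : ℝ) :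
    ‖Complex.exp (Complex.I * t) - 1 - Complex.I * t‖ ≤ t ^ 2 / 2 + |t| ^ 3 / 6 := by
  have hre : (Complex.exp (Complex.I * t) - 1 - Complex.I * t).re = Real.cos t - 1 := by
    simp [mul_comm Complex.I, Complex.exp_ofReal_mul_I_re]
  have him : (Complex.exp (Complex.I * t) - 1 - Complex.I * t).im = -(t - Real.sin t) := by
    simp [mul_comm Complex.I, Complex.exp_ofReal_mul_I_im]
  have hcos : |Real.cos t - 1| ≤ t ^ 2 / 2 := by
    rw [abs_sub_comm, abs_of_nonneg (sub_nonneg.2 (cos_le_one t))]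
    linarith [one_sub_sq_div_two_le_cos (x := t)]
  calc _ ≤ |Real.cos t - 1| + |-(t - Real.sin t)| :=
        (Complex.norm_le_abs_re_add_abs_im _).trans_eq (by rw [hre, him])
    _ ≤ t ^ 2 / 2 + |t| ^ 3 / 6 := by
        rw [abs_neg]; exact add_le_add hcos (abs_sub_sin_le t)

lemma inv_one_add_sq_sub_one_add_two_mul {K : Type*} [Field K] {u : K} (hu : 1 + u ≠ 0) :
    ((1 + u) ^ 2)⁻¹ - 1 + 2 * u = u ^ 2 * (3 + 2 * u) / (1 + u) ^ 2 := by
  field_simp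
  ring

lemma norm_inv_one_add_sq_sub_one_add_two_mul_le {𝕜 : Type*} [RCLike 𝕜] {u : 𝕜}
    (hu : 1 + u ≠ 0) :
    ‖((1 + u) ^ 2)⁻¹ - 1 + 2 * u‖ ≤ ‖u‖ ^ 2 * (3 + 2 * ‖u‖) / ‖1 + u‖ ^ 2 := by
  rw [inv_one_add_sq_sub_one_add_two_mul hu, norm_div, norm_mul, norm_pow, norm_pow]
  gcongr
  calc ‖(3 : 𝕜) + 2 * u‖ ≤ ‖(3 : 𝕜)‖ + ‖2 * u‖ := norm_add_le _ _
    _ = 3 + 2 * ‖u‖ := by rw [norm_mul, RCLike.norm_ofNat, RCLike.norm_ofNat]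

lemma sq_mul_sq_div_dilation_sq {K : Type*} [Field K] {a b E : K} (ha : a ≠ 0) (hE : E ≠ 0) :
    a ^ 2 * E ^ 2 / (b + (a - b) * E) ^ 2 = ((1 + b / a * (E⁻¹ - 1)) ^ 2)⁻¹ := by
  have hfactor : b + (a - b) * E = a * E * (1 + b / a * (E⁻¹ - 1)) := by
    field_simp
    ring
  rw [hfactor, ← mul_pow, mul_pow (a * E), div_mul_cancel_left₀ (pow_ne_zero 2 (mul_ne_zero ha hE))]

lemma cos_le_norm_one_add_mul_exp_I_mul_sub_one {ρ : ℝ} (hρ : ρ ≤ 1) (t : ℝ) :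
    Real.cos t ≤ ‖1 + ρ * (Complex.exp (Complex.I * t) - 1)‖ := by
  have hre : (1 + ρ * (Complex.exp (Complex.I * t) - 1)).re = 1 + ρ * (Real.cos t - 1) := by
    simp [mul_comm Complex.I, Complex.exp_ofReal_mul_I_re]
  calc Real.cos t ≤ 1 + ρ * (Real.cos t - 1) := by nlinarith [cos_le_one t]
    _ ≤ _ := hre ▸ Complex.re_le_norm _

lemma half_le_cos_of_abs_le_pi_div_three {β : ℝ} (hβ : |β| ≤ π / 3) : 1 / 2 ≤ Real.cos β := by
  rw [← Real.cos_abs, ← Real.cos_pi_div_three]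
  exact Real.cos_le_cos_of_nonneg_of_le_pi (abs_nonneg β) (by linarith [pi_pos]) hβ

lemma norm_inv_one_add_sq_sub_one_sub_le {ρ β : ℝ} (hρ₀ : 0 ≤ ρ) (hρ₁ : ρ ≤ 1)
    (hβ : |β| ≤ π / 3) :
    ‖((1 + ρ * ((Complex.exp (Complex.I * β))⁻¹ - 1)) ^ 2)⁻¹ - 1 - 2 * Complex.I * β * ρ‖
      ≤ 26 * ρ * β ^ 2 := by
  rw [← Complex.exp_neg, ← mul_neg, ← Complex.ofReal_neg]
  set E := Complex.exp (Complex.I * (-β : ℝ))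
  set u : ℂ := ρ * (E - 1)
  have hβ_le : |β| ≤ 4 / 3 := by linarith [pi_le_four]
  have hu : ‖u‖ ≤ ρ * |β| := by
    rw [norm_mul, Complex.norm_real, Real.norm_of_nonneg hρ₀]
    gcongr
    exact Real.norm_exp_I_mul_ofReal_sub_one_le.trans_eq (by rw [norm_neg, Real.norm_eq_abs])
  have h1u : 1 / 2 ≤ ‖1 + u‖ := by
    have h := cos_le_norm_one_add_mul_exp_I_mul_sub_one hρ₁ (-β)
    rw [Real.cos_neg] at h
    exact (half_le_cos_of_abs_le_pi_div_three hβ).trans h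
  have hquad : ‖((1 + u) ^ 2)⁻¹ - 1 + 2 * u‖ ≤ 24 * ρ * β ^ 2 := by
    have h1u0 : 1 + u ≠ 0 := norm_pos_iff.1 (by linarith)
    calc _ ≤ ‖u‖ ^ 2 * (3 + 2 * ‖u‖) / ‖1 + u‖ ^ 2 :=
          norm_inv_one_add_sq_sub_one_add_two_mul_le h1u0
      _ ≤ (ρ * |β|) ^ 2 * 6 / (1 / 2) ^ 2 := by
          gcongr
          nlinarith [norm_nonneg u]
      _ = 24 * ρ * (ρ * β ^ 2) := by rw [mul_pow, sq_abs]; ring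
      _ ≤ 24 * ρ * β ^ 2 := by
          nlinarith [mul_nonneg (mul_nonneg hρ₀ (sub_nonneg.2 hρ₁)) (sq_nonneg β)]
  have htaylor : ‖E - 1 - Complex.I * (-β : ℝ)‖ ≤ β ^ 2 := by
    refine (Complex.norm_exp_I_mul_ofReal_sub_one_sub_le (-β)).trans ?_
    have hcube : |β| ^ 3 = |β| * β ^ 2 := by rw [pow_succ', sq_abs]
    rw [abs_neg, neg_sq, hcube]
    nlinarith [sq_nonneg β]
  have hsplit : ((1 + u) ^ 2)⁻¹ - 1 - 2 * Complex.I * β * ρ =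
      (((1 + u) ^ 2)⁻¹ - 1 + 2 * u) - 2 * ρ * (E - 1 - Complex.I * (-β : ℝ)) := by
    push_cast
    ring
  calc _ ≤ ‖((1 + u) ^ 2)⁻¹ - 1 + 2 * u‖ + ‖2 * ρ * (E - 1 - Complex.I * (-β : ℝ))‖ := by
        rw [hsplit]; exact norm_sub_le _ _
    _ ≤ 24 * ρ * β ^ 2 + 2 * ρ * β ^ 2 := by
        gcongr
        rw [norm_mul, norm_mul, Complex.norm_real, Real.norm_of_nonneg hρ₀, Complex.norm_two]
        gcongr
    _ = 26 * ρ * β ^ 2 := by ring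

/-- There is a universal constant `C > 0` such that for all real `r > 0`, `r₀ ∈ [0, r]`
and `|β| ≤ π/3`, writing `r_β = r₀ + (r - r₀) e^{iβ}`,
`| r² e^{2iβ} / r_β² - 1 - 2iβ (r₀/r) | ≤ C (r₀/r) β²`. -/
theorem kinetic_correction_expansion :
    ∃ C : ℝ, 0 < C ∧ ∀ r r₀ β : ℝ, 0 < r → r₀ ∈ Set.Icc 0 r → |β| ≤ π / 3 →
      ‖(r : ℂ) ^ 2 * Complex.exp (2 * Complex.I * (β : ℂ)) /
            ((r₀ : ℂ) + ((r : ℂ) - (r₀ : ℂ)) * Complex.exp (Complex.I * (β : ℂ))) ^ 2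
          - 1 - 2 * Complex.I * (β : ℂ) * ((r₀ : ℂ) / (r : ℂ))‖
        ≤ C * (r₀ / r) * β ^ 2 := by
  refine ⟨26, by norm_num, fun r r₀ β hr ⟨hr₀, hr₀r⟩ hβ => ?_⟩
  have hexp : Complex.exp (2 * Complex.I * β) = Complex.exp (Complex.I * β) ^ 2 := by
    rw [← Complex.exp_nat_mul]; push_cast; ring_nf
  have hρ : ((r₀ / r : ℝ) : ℂ) = (r₀ : ℂ) / r := Complex.ofReal_div r₀ r
  rw [hexp, sq_mul_sq_div_dilation_sq (by exact_mod_cast hr.ne') (Complex.exp_ne_zero _), ← hρ]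
  exact norm_inv_one_add_sq_sub_one_sub_le (div_nonneg hr₀ hr.le) ((div_le_one hr).2 hr₀r) hβ
end

section
/- Let 0 ≤ r₀ ≤ r with r > 0, let β ∈ [0, π/6], and set r_β = r₀ + (r − r₀)e^{iβ} ∈ ℂ. Then: (i) |r_β| ≤ r; (ii) 0 ≤ arg(r_β) ≤ β; (iii) Re(1/r_β²) ≥ cos(2β)/r² ≥ 1/(2r²). In particular r_β ≠ 0. -/
open Real

/-!
`r_β = r₀ + (r - r₀) e^{iβ}` is the sum of a nonnegative real number and a point of length
`r - r₀` on the ray of angle `β`. Hence it lies in the disc of radius `r` (triangle inequality)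
and in the sector `0 ≤ arg ≤ β` (its slope is at most `tan β`). Writing `z = |z| e^{i arg z}`
gives `Re (1 / z²) = cos (2 arg z) / |z|²`, and `cos` is decreasing on `[0, π]`.
-/

noncomputable def exteriorDilation (r₀ r β : ℝ) : ℂ :=
  r₀ + (r - r₀) * Complex.exp (Complex.I * β)

section exteriorDilation

variable {r₀ r β : ℝ}

theorem exteriorDilation_re : (exteriorDilation r₀ r β).re = r₀ + (r - r₀) * cos β := by
  simp [exteriorDilation, mul_comm Complex.I, Complex.exp_ofReal_mul_I_re,
    Complex.exp_ofReal_mul_I_im]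

theorem exteriorDilation_im : (exteriorDilation r₀ r β).im = (r - r₀) * sin β := by
  simp [exteriorDilation, mul_comm Complex.I, Complex.exp_ofReal_mul_I_re,
    Complex.exp_ofReal_mul_I_im]

theorem norm_exteriorDilation_le (h₀ : 0 ≤ r₀) (hr₀r : r₀ ≤ r) :
    ‖exteriorDilation r₀ r β‖ ≤ r :=
  calc ‖exteriorDilation r₀ r β‖
      ≤ ‖(r₀ : ℂ)‖ + ‖((r : ℂ) - r₀) * Complex.exp (Complex.I * β)‖ := norm_add_le _ _
    _ = r := by
      rw [norm_mul, ← Complex.ofReal_sub, Complex.norm_real, Complex.norm_real, mul_comm Complex.I,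
        Complex.norm_exp_ofReal_mul_I, Real.norm_of_nonneg h₀,
        Real.norm_of_nonneg (sub_nonneg.2 hr₀r)]
      ring

theorem exteriorDilation_re_pos (h₀ : 0 ≤ r₀) (hr : 0 < r)
    (hβ : β ∈ Set.Ioo (-(π / 2)) (π / 2)) : 0 < (exteriorDilation r₀ r β).re := by
  have hcos : 0 < cos β := cos_pos_of_mem_Ioo hβ
  rw [exteriorDilation_re]
  -- `r₀ + (r - r₀) cos β = r₀ (1 - cos β) + r cos β`
  nlinarith [mul_nonneg h₀ (sub_nonneg.2 (cos_le_one β)), mul_pos hr hcos]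

theorem arg_exteriorDilation_nonneg (hr₀r : r₀ ≤ r) (hβ : β ∈ Set.Icc 0 π) :
    0 ≤ (exteriorDilation r₀ r β).arg := by
  rw [Complex.arg_nonneg_iff, exteriorDilation_im]
  exact mul_nonneg (sub_nonneg.2 hr₀r) (sin_nonneg_of_nonneg_of_le_pi hβ.1 hβ.2)

theorem arg_exteriorDilation_le (h₀ : 0 ≤ r₀) (hr : 0 < r) (hβ : β ∈ Set.Ico 0 (π / 2)) :
    (exteriorDilation r₀ r β).arg ≤ β := by
  set z := exteriorDilation r₀ r β
  have hβ' : β ∈ Set.Ioo (-(π / 2)) (π / 2) := ⟨by linarith [pi_pos, hβ.1], hβ.2⟩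
  have hre : 0 < z.re := exteriorDilation_re_pos h₀ hr hβ'
  have hcos : 0 < cos β := cos_pos_of_mem_Ioo hβ'
  have hsin : 0 ≤ sin β := sin_nonneg_of_nonneg_of_le_pi hβ.1 (by linarith [pi_pos, hβ.2])
  have harg : z.arg = arctan (z.im / z.re) := by
    obtain ⟨hlo, hhi⟩ := abs_lt.1 (Complex.abs_arg_lt_pi_div_two_iff.2 (Or.inl hre))
    rw [← Complex.tan_arg, arctan_tan hlo hhi]
  -- the slope inequality reduces to `0 ≤ r₀ sin β`
  have hslope : z.im / z.re ≤ tan β := by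
    rw [tan_eq_sin_div_cos, div_le_div_iff₀ hre hcos, exteriorDilation_re, exteriorDilation_im]
    nlinarith [mul_nonneg h₀ hsin]
  rw [harg, ← arctan_tan hβ'.1 hβ'.2]
  exact arctan_mono hslope

end exteriorDilation

theorem Complex.re_one_div_sq (z : ℂ) : (1 / z ^ 2).re = Real.cos (2 * z.arg) / ‖z‖ ^ 2 := by
  conv_lhs => rw [← Complex.norm_mul_exp_arg_mul_I z]
  rw [mul_pow, ← Complex.exp_nat_mul, one_div, mul_inv, ← Complex.exp_neg, ← Complex.ofReal_pow,
    ← Complex.ofReal_inv, Complex.re_ofReal_mul]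
  push_cast
  rw [show -(2 * ((z.arg : ℂ) * Complex.I)) = ((-(2 * z.arg) : ℝ) : ℂ) * Complex.I by
      push_cast; ring,
    Complex.exp_ofReal_mul_I_re, Real.cos_neg, div_eq_inv_mul]

theorem Complex.cos_two_mul_div_sq_le_re_one_div_sq {z : ℂ} {β r : ℝ} (hz : z ≠ 0)
    (harg : |z.arg| ≤ β) (hβ : β ≤ π / 4) (hzr : ‖z‖ ≤ r) :
    Real.cos (2 * β) / r ^ 2 ≤ (1 / z ^ 2).re := by
  have hβ0 : 0 ≤ β := (abs_nonneg _).trans harg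
  have hcos_nonneg : 0 ≤ Real.cos (2 * β) :=
    Real.cos_nonneg_of_mem_Icc ⟨by linarith [pi_pos], by linarith⟩
  have hcos_le : Real.cos (2 * β) ≤ Real.cos (2 * z.arg) := by
    rw [← Real.cos_abs (2 * z.arg), abs_mul, abs_two]
    exact Real.cos_le_cos_of_nonneg_of_le_pi (by positivity) (by linarith) (by linarith)
  have hnorm : 0 < ‖z‖ ^ 2 := by positivity
  rw [re_one_div_sq]
  calc Real.cos (2 * β) / r ^ 2 ≤ Real.cos (2 * β) / ‖z‖ ^ 2 :=
        div_le_div_of_nonneg_left hcos_nonneg hnorm (pow_le_pow_left₀ (norm_nonneg z) hzr 2)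
    _ ≤ Real.cos (2 * z.arg) / ‖z‖ ^ 2 := div_le_div_of_nonneg_right hcos_le hnorm.le

theorem one_div_two_mul_sq_le_cos_two_mul_div_sq {β : ℝ} (r : ℝ) (hβ : |β| ≤ π / 6) :
    1 / (2 * r ^ 2) ≤ cos (2 * β) / r ^ 2 := by
  have hcos : 1 / 2 ≤ cos (2 * β) := by
    rw [← cos_pi_div_three, ← cos_abs (2 * β), abs_mul, abs_two]
    exact cos_le_cos_of_nonneg_of_le_pi (by positivity) (by linarith [pi_pos]) (by linarith)
  calc 1 / (2 * r ^ 2) = (1 / 2) / r ^ 2 := by ring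
    _ ≤ cos (2 * β) / r ^ 2 := div_le_div_of_nonneg_right hcos (sq_nonneg r)

/-- Elementary estimates on the exterior dilation `r_β = r₀ + (r - r₀) e^{iβ}` of a real
point `r` about `r₀` by an angle `β ∈ [0, π/6]`:
(i) `|r_β| ≤ r`; (ii) `0 ≤ arg r_β ≤ β`; (iii) `Re (1/r_β²) ≥ cos (2β)/r² ≥ 1/(2r²)`;
in particular `r_β ≠ 0`. -/
theorem exterior_dilation_elementary (r r₀ β : ℝ) (hr₀ : 0 ≤ r₀) (hr₀r : r₀ ≤ r)
    (hr : 0 < r) (hβ : β ∈ Set.Icc 0 (π / 6)) :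
    ((r₀ : ℂ) + ((r : ℂ) - (r₀ : ℂ)) * Complex.exp (Complex.I * (β : ℂ))) ≠ 0 ∧
    ‖(r₀ : ℂ) + ((r : ℂ) - (r₀ : ℂ)) * Complex.exp (Complex.I * (β : ℂ))‖ ≤ r ∧
    0 ≤ Complex.arg ((r₀ : ℂ) + ((r : ℂ) - (r₀ : ℂ)) * Complex.exp (Complex.I * (β : ℂ))) ∧
    Complex.arg ((r₀ : ℂ) + ((r : ℂ) - (r₀ : ℂ)) * Complex.exp (Complex.I * (β : ℂ))) ≤ β ∧
    Real.cos (2 * β) / r ^ 2 ≤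
      (1 / ((r₀ : ℂ) + ((r : ℂ) - (r₀ : ℂ)) * Complex.exp (Complex.I * (β : ℂ))) ^ 2).re ∧
    1 / (2 * r ^ 2) ≤ Real.cos (2 * β) / r ^ 2 := by
  obtain ⟨hβ0, hβ6⟩ := hβ
  have hπ := pi_pos
  have hne : exteriorDilation r₀ r β ≠ 0 :=
    Complex.ne_zero_of_re_pos (exteriorDilation_re_pos hr₀ hr ⟨by linarith, by linarith⟩)
  have hnorm := norm_exteriorDilation_le (β := β) hr₀ hr₀r
  have harg0 := arg_exteriorDilation_nonneg hr₀r ⟨hβ0, by linarith⟩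
  have hargβ := arg_exteriorDilation_le hr₀ hr ⟨hβ0, by linarith⟩
  have habs : |(exteriorDilation r₀ r β).arg| ≤ β := abs_le.2 ⟨by linarith, hargβ⟩
  exact ⟨hne, hnorm, harg0, hargβ,
    Complex.cos_two_mul_div_sq_le_re_one_div_sq hne habs (by linarith) hnorm,
    one_div_two_mul_sq_le_cos_two_mul_div_sq r (abs_le.2 ⟨by linarith, hβ6⟩)⟩
end
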